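/- For positive reals a, b, c: ∫₀^∞ x^{-3/2} K₀(2√((ax² + bx + c)/x)) dx = π e^{-2√(2√(ac) + b)} / (2√c), where K₀ is the modified Bessel function of the second kind of order 0. -/

import Mathlib

open MeasureTheory Real

/-- The modified Bessel function of the second kind (Macdonald function) of order `ν`,
via its standard integral representation `K_ν(x) = ∫₀^∞ exp (-x cosh t) cosh (ν t) dt`. -/
noncomputable def besselK (ν x : ℝ) : ℝ :=
  ∫ t in Set.Ioi (0:ℝ), Real.exp (-x * Real.cosh t) * Real.cosh (ν * t)

open Set

-- Glasser-type integral
lemma glasser (w : ℝ) (hw : 0 < w) :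
    ∫ t in Ioi (0:ℝ), Real.exp (-t^2 - w/t^2) = Real.sqrt π / 2 * Real.exp (-2 * Real.sqrt w) := by
  set m := Real.sqrt w with hm
  have hm0 : 0 < m := Real.sqrt_pos.mpr hw
  have hm2 : m ^ 2 = w := Real.sq_sqrt hw.le
  -- change of variables φ t = t - m/t on Ioi 0
  have hderiv : ∀ t ∈ Ioi (0:ℝ), HasDerivWithinAt (fun t => t - m / t) (1 + m / t^2) (Ioi 0) t := by
    intro t ht
    have ht0 : t ≠ 0 := ne_of_gt ht
    have h1 : HasDerivAt (fun t : ℝ => t - m / t) (1 - m * (-(t^2)⁻¹)) t := by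
      simpa only [div_eq_mul_inv] using (hasDerivAt_id' t).fun_sub (((hasDerivAt_inv ht0)).const_mul m)
    have : (1 : ℝ) - m * (-(t^2)⁻¹) = 1 + m / t^2 := by field_simp; ring
    exact (this ▸ h1).hasDerivWithinAt
  have hinj : InjOn (fun t => t - m / t) (Ioi (0:ℝ)) := by
    have : StrictMonoOn (fun t => t - m / t) (Ioi (0:ℝ)) := by
      intro t₁ h₁ t₂ h₂ h
      have : m / t₂ < m / t₁ := by
        apply div_lt_div_of_pos_left hm0 h₁ h
      simp only
      linarith
    exact this.injOn
  have himg : (fun t => t - m / t) '' (Ioi (0:ℝ)) = univ := by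
    apply eq_univ_of_forall
    intro u
    have hr : 0 < Real.sqrt (u^2 + 4*m) := Real.sqrt_pos.mpr (by nlinarith)
    have hr2 : (Real.sqrt (u^2 + 4*m))^2 = u^2 + 4*m := Real.sq_sqrt (by nlinarith)
    set r := Real.sqrt (u^2 + 4*m)
    have hru : -u < r := by nlinarith [abs_nonneg u, sq_abs u, neg_abs_le u, Real.sqrt_le_sqrt (show u^2 ≤ u^2 + 4*m by nlinarith)]
    refine ⟨(u + r)/2, ?_, ?_⟩
    · simp only [mem_Ioi]; linarith
    · have ht0 : (0:ℝ) < u + r := by linarith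
      have hne : u + r ≠ 0 := ne_of_gt ht0
      show (u + r)/2 - m / ((u + r)/2) = u
      field_simp
      nlinarith
  have hgauss : ∫ u : ℝ, Real.exp (-u^2) = Real.sqrt π := by
    simpa using integral_gaussian 1
  have hF : ∫ t in Ioi (0:ℝ), (1 + m/t^2) * Real.exp (-(t - m/t)^2) = Real.sqrt π := by
    rw [← hgauss]
    have := integral_image_eq_integral_abs_deriv_smul measurableSet_Ioi hderiv hinj
        (fun u => Real.exp (-u^2))
    rw [himg] at this
    rw [Measure.restrict_univ] at this
    rw [this]
    refine setIntegral_congr_fun measurableSet_Ioi (fun t ht => ?_)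
    have ht0 : (0:ℝ) < t := ht
    have : |1 + m/t^2| = 1 + m/t^2 := abs_of_pos (by positivity)
    simp [this, smul_eq_mul]
  have hFint : IntegrableOn (fun t => (1 + m/t^2) * Real.exp (-(t - m/t)^2)) (Ioi (0:ℝ)) := by
    by_contra h
    rw [MeasureTheory.integral_undef h] at hF
    exact (Real.sqrt_pos.mpr Real.pi_pos).ne' hF.symm
  -- measurability helpers
  have hmeasA : AEStronglyMeasurable (fun t : ℝ => Real.exp (-(t - m/t)^2))
      (volume.restrict (Ioi 0)) := by
    apply ContinuousOn.aestronglyMeasurable _ measurableSet_Ioi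
    apply ContinuousOn.rexp
    apply ContinuousOn.neg
    apply ContinuousOn.pow
    exact continuousOn_id.sub (continuousOn_const.div continuousOn_id (fun t ht => ne_of_gt ht))
  have hmeasB : AEStronglyMeasurable (fun t : ℝ => m/t^2 * Real.exp (-(t - m/t)^2))
      (volume.restrict (Ioi 0)) := by
    apply ContinuousOn.aestronglyMeasurable _ measurableSet_Ioi
    apply ContinuousOn.mul
    · exact continuousOn_const.div (continuousOn_pow 2) (fun t ht => pow_ne_zero 2 (ne_of_gt ht))
    · apply ContinuousOn.rexp
      apply ContinuousOn.neg
      apply ContinuousOn.pow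
      exact continuousOn_id.sub (continuousOn_const.div continuousOn_id (fun t ht => ne_of_gt ht))
  have hbound : ∀ᵐ t ∂(volume.restrict (Ioi (0:ℝ))), 0 < t := by
    filter_upwards [ae_restrict_mem measurableSet_Ioi] with t ht using ht
  have hAint : IntegrableOn (fun t => Real.exp (-(t - m/t)^2)) (Ioi (0:ℝ)) := by
    apply hFint.mono' hmeasA
    filter_upwards [hbound] with t ht
    rw [Real.norm_eq_abs, abs_of_pos (Real.exp_pos _)]
    nlinarith [Real.exp_pos (-(t - m/t)^2), div_pos hm0 (pow_pos ht 2)]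
  have hBint : IntegrableOn (fun t => m/t^2 * Real.exp (-(t - m/t)^2)) (Ioi (0:ℝ)) := by
    apply hFint.mono' hmeasB
    filter_upwards [hbound] with t ht
    have h1 : 0 < m/t^2 := div_pos hm0 (pow_pos ht 2)
    rw [Real.norm_eq_abs, abs_of_pos (by positivity)]
    nlinarith [Real.exp_pos (-(t - m/t)^2)]
  have hsplit : (∫ t in Ioi (0:ℝ), Real.exp (-(t - m/t)^2))
      + (∫ t in Ioi (0:ℝ), m/t^2 * Real.exp (-(t - m/t)^2)) = Real.sqrt π := by
    rw [← integral_add hAint hBint, ← hF]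
    refine setIntegral_congr_fun measurableSet_Ioi (fun t ht => ?_)
    ring
  have hAB : (∫ t in Ioi (0:ℝ), Real.exp (-(t - m/t)^2))
      = ∫ t in Ioi (0:ℝ), m/t^2 * Real.exp (-(t - m/t)^2) := by
    have hderiv2 : ∀ t ∈ Ioi (0:ℝ), HasDerivWithinAt (fun t => m / t) (-(m / t^2)) (Ioi 0) t := by
      intro t ht
      have ht0 : t ≠ 0 := ne_of_gt ht
      have h1 : HasDerivAt (fun t : ℝ => m / t) (m * (-(t^2)⁻¹)) t := by
        simpa [div_eq_mul_inv] using ((hasDerivAt_inv ht0)).const_mul m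
      have : m * (-(t^2)⁻¹) = -(m / t^2) := by field_simp
      exact (this ▸ h1).hasDerivWithinAt
    have hinj2 : InjOn (fun t : ℝ => m / t) (Ioi (0:ℝ)) := by
      intro t₁ h₁ t₂ h₂ h
      have h₁' : (0:ℝ) < t₁ := h₁
      have h₂' : (0:ℝ) < t₂ := h₂
      simp only at h
      rw [div_eq_div_iff (ne_of_gt h₁') (ne_of_gt h₂')] at h
      exact (mul_left_cancel₀ (ne_of_gt hm0) h).symm
    have himg2 : (fun t : ℝ => m / t) '' (Ioi (0:ℝ)) = Ioi (0:ℝ) := by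
      apply Subset.antisymm
      · rintro _ ⟨t, ht, rfl⟩
        exact div_pos hm0 ht
      · intro u hu
        exact ⟨m / u, div_pos hm0 hu, by field_simp⟩
    have := integral_image_eq_integral_abs_deriv_smul measurableSet_Ioi hderiv2 hinj2
        (fun s => Real.exp (-(s - m/s)^2))
    rw [himg2] at this
    rw [this]
    refine setIntegral_congr_fun measurableSet_Ioi (fun t ht => ?_)
    have ht0 : (0:ℝ) < t := ht
    have habs : |(-(m / t^2))| = m / t^2 := by
      rw [abs_neg, abs_of_pos (div_pos hm0 (pow_pos ht0 2))]
    rw [smul_eq_mul, habs]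
    congr 2
    have : m / (m / t) = t := by field_simp
    rw [this]
    ring
  have hA : (∫ t in Ioi (0:ℝ), Real.exp (-(t - m/t)^2)) = Real.sqrt π / 2 := by linarith
  calc ∫ t in Ioi (0:ℝ), Real.exp (-t^2 - w/t^2)
      = ∫ t in Ioi (0:ℝ), Real.exp (-2*m) * Real.exp (-(t - m/t)^2) := by
        refine setIntegral_congr_fun measurableSet_Ioi (fun t ht => ?_)
        have ht0 : (0:ℝ) < t := ht
        rw [← Real.exp_add]
        congr 1
        have h1 : (t - m/t)^2 = t^2 - 2*m + m^2/t^2 := by field_simp; ring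
        rw [h1, ← hm2]
        ring
    _ = Real.exp (-2*m) * ∫ t in Ioi (0:ℝ), Real.exp (-(t - m/t)^2) := by rw [MeasureTheory.integral_const_mul]
    _ = Real.sqrt π / 2 * Real.exp (-2 * Real.sqrt w) := by rw [hA, ← hm]; ring


lemma halfpow_integral (p q : ℝ) (hp : 0 < p) (hq : 0 < q) :
    ∫ u in Ioi (0:ℝ), u ^ (-(1:ℝ)/2) * Real.exp (-(q*u) - p/u)
      = Real.sqrt (π/q) * Real.exp (-2 * Real.sqrt (p*q)) := by
  have hderiv : ∀ t ∈ Ioi (0:ℝ), HasDerivWithinAt (fun t : ℝ => t^2/q) (2*t/q) (Ioi 0) t := by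
    intro t ht
    have h1 : HasDerivAt (fun t : ℝ => t^2/q) ((2*t)/q) t := by
      simpa using (hasDerivAt_pow 2 t).div_const q
    exact h1.hasDerivWithinAt
  have hinj : InjOn (fun t : ℝ => t^2/q) (Ioi (0:ℝ)) := by
    intro t₁ h₁ t₂ h₂ h
    have h₁' : (0:ℝ) < t₁ := h₁
    have h₂' : (0:ℝ) < t₂ := h₂
    simp only at h
    field_simp at h
    exact (pow_left_inj₀ h₁'.le h₂'.le two_ne_zero).mp h
  have himg : (fun t : ℝ => t^2/q) '' (Ioi (0:ℝ)) = Ioi (0:ℝ) := by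
    apply Subset.antisymm
    · rintro _ ⟨t, ht, rfl⟩
      exact div_pos (pow_pos ht 2) hq
    · intro u hu
      refine ⟨Real.sqrt (q*u), Real.sqrt_pos.mpr (mul_pos hq hu), ?_⟩
      simp only
      rw [Real.sq_sqrt (mul_pos hq hu).le]
      field_simp
  have := integral_image_eq_integral_abs_deriv_smul measurableSet_Ioi hderiv hinj
      (fun u => u ^ (-(1:ℝ)/2) * Real.exp (-(q*u) - p/u))
  rw [himg] at this
  rw [this]
  have hgl := glasser (p*q) (mul_pos hp hq)
  calc ∫ t in Ioi (0:ℝ), |2*t/q| • ((t^2/q) ^ (-(1:ℝ)/2) * Real.exp (-(q*(t^2/q)) - p/(t^2/q)))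
      = ∫ t in Ioi (0:ℝ), (2/Real.sqrt q) * Real.exp (-t^2 - (p*q)/t^2) := by
        refine setIntegral_congr_fun measurableSet_Ioi (fun t ht => ?_)
        have ht0 : (0:ℝ) < t := ht
        have htq : (0:ℝ) < t^2/q := div_pos (pow_pos ht0 2) hq
        have h1 : (t^2/q) ^ (-(1:ℝ)/2) = Real.sqrt q / t := by
          rw [show (-(1:ℝ)/2) = -(1/2 : ℝ) by norm_num, Real.rpow_neg htq.le,
            ← Real.sqrt_eq_rpow, Real.sqrt_div (sq_nonneg t), Real.sqrt_sq ht0.le, inv_div]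
        have h2 : -(q*(t^2/q)) - p/(t^2/q) = -t^2 - (p*q)/t^2 := by
          field_simp
        rw [h1, h2, smul_eq_mul, abs_of_pos (by positivity : (0:ℝ) < 2*t/q)]
        have hsq : (0:ℝ) < Real.sqrt q := Real.sqrt_pos.mpr hq
        field_simp
        linear_combination Real.mul_self_sqrt hq.le
    _ = (2/Real.sqrt q) * ((Real.sqrt π)/2 * Real.exp (-2 * Real.sqrt (p*q))) := by
        rw [MeasureTheory.integral_const_mul, hgl]
    _ = Real.sqrt (π/q) * Real.exp (-2 * Real.sqrt (p*q)) := by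
        rw [Real.sqrt_div Real.pi_pos.le]
        ring


lemma threehalf_integral (p q : ℝ) (hp : 0 < p) (hq : 0 < q) :
    ∫ x in Ioi (0:ℝ), x ^ (-(3:ℝ)/2) * Real.exp (-(p*x) - q/x)
      = Real.sqrt (π/q) * Real.exp (-2 * Real.sqrt (p*q)) := by
  have hderiv : ∀ u ∈ Ioi (0:ℝ), HasDerivWithinAt (fun u : ℝ => u⁻¹) (-(u^2)⁻¹) (Ioi 0) u :=
    fun u hu => (hasDerivAt_inv (ne_of_gt hu)).hasDerivWithinAt
  have hinj : InjOn (fun u : ℝ => u⁻¹) (Ioi (0:ℝ)) := by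
    intro t₁ h₁ t₂ h₂ h
    have h₁' : (0:ℝ) < t₁ := h₁
    have h₂' : (0:ℝ) < t₂ := h₂
    simp only at h
    field_simp at h
    exact h.symm
  have himg : (fun u : ℝ => u⁻¹) '' (Ioi (0:ℝ)) = Ioi (0:ℝ) := by
    apply Subset.antisymm
    · rintro _ ⟨t, ht, rfl⟩
      exact mem_Ioi.mpr (inv_pos.mpr (mem_Ioi.mp ht))
    · intro u hu
      exact ⟨u⁻¹, mem_Ioi.mpr (inv_pos.mpr (mem_Ioi.mp hu)), inv_inv u⟩
  have := integral_image_eq_integral_abs_deriv_smul measurableSet_Ioi hderiv hinj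
      (fun x => x ^ (-(3:ℝ)/2) * Real.exp (-(p*x) - q/x))
  rw [himg] at this
  rw [this, ← halfpow_integral p q hp hq]
  refine setIntegral_congr_fun measurableSet_Ioi (fun u hu => ?_)
  have hu0 : (0:ℝ) < u := hu
  have h1 : (u⁻¹) ^ (-(3:ℝ)/2) = u ^ ((3:ℝ)/2) := by
    rw [← Real.rpow_neg_one u, ← Real.rpow_mul hu0.le]
    norm_num
  have h2 : |(-(u^2)⁻¹)| = (u^2)⁻¹ := by
    rw [abs_neg, abs_of_pos (by positivity)]
  rw [smul_eq_mul, h2, h1]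
  have h3 : -(p*u⁻¹) - q/u⁻¹ = -(q*u) - p/u := by
    field_simp
    ring
  rw [h3]
  have h4 : (u^2)⁻¹ * (u ^ ((3:ℝ)/2) * Real.exp (-(q*u) - p/u))
      = u ^ (-(1:ℝ)/2) * Real.exp (-(q*u) - p/u) := by
    rw [show ((u:ℝ)^2)⁻¹ = u ^ (-2:ℝ) by
      rw [← Real.rpow_natCast u 2, ← Real.rpow_neg hu0.le]; norm_num]
    rw [← mul_assoc, ← Real.rpow_add hu0]
    norm_num
  rw [← h4]


lemma besselK_rep (u : ℝ) (hu : 0 < u) :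
    (∫ s in Ioi (0:ℝ), s⁻¹ * Real.exp (-s - u/s)) = 2 * besselK 0 (2 * Real.sqrt u) := by
  have hsu : (0:ℝ) < Real.sqrt u := Real.sqrt_pos.mpr hu
  have hderiv : ∀ t ∈ (univ : Set ℝ),
      HasDerivWithinAt (fun t : ℝ => Real.sqrt u * Real.exp t) (Real.sqrt u * Real.exp t) univ t :=
    fun t _ => ((Real.hasDerivAt_exp t).const_mul (Real.sqrt u)).hasDerivWithinAt
  have hinj : InjOn (fun t : ℝ => Real.sqrt u * Real.exp t) univ := by
    intro t₁ _ t₂ _ h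
    simp only at h
    have := mul_left_cancel₀ (ne_of_gt hsu) h
    exact Real.exp_injective this
  have himg : (fun t : ℝ => Real.sqrt u * Real.exp t) '' univ = Ioi (0:ℝ) := by
    apply Subset.antisymm
    · rintro _ ⟨t, _, rfl⟩
      exact mul_pos hsu (Real.exp_pos t)
    · intro s hs
      refine ⟨Real.log (s / Real.sqrt u), mem_univ _, ?_⟩
      simp only
      rw [Real.exp_log (div_pos hs hsu)]
      field_simp
  have := integral_image_eq_integral_abs_deriv_smul MeasurableSet.univ hderiv hinj
      (fun s => s⁻¹ * Real.exp (-s - u/s))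
  rw [himg, Measure.restrict_univ] at this
  rw [this]
  have heq : ∀ t : ℝ, |Real.sqrt u * Real.exp t| •
      ((Real.sqrt u * Real.exp t)⁻¹ * Real.exp (-(Real.sqrt u * Real.exp t) - u/(Real.sqrt u * Real.exp t)))
      = Real.exp (-(2 * Real.sqrt u) * Real.cosh |t|) := by
    intro t
    have he : (0:ℝ) < Real.exp t := Real.exp_pos t
    have habs : |Real.sqrt u * Real.exp t| = Real.sqrt u * Real.exp t :=
      abs_of_pos (mul_pos hsu he)
    rw [smul_eq_mul, habs, mul_inv_cancel_left₀ (ne_of_gt (mul_pos hsu he))]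
    congr 1
    rw [Real.cosh_abs, Real.cosh_eq]
    have h1 : u / (Real.sqrt u * Real.exp t) = Real.sqrt u * Real.exp (-t) := by
      rw [Real.exp_neg, div_mul_eq_div_div, Real.div_sqrt, div_eq_mul_inv]
    rw [h1, Real.exp_neg]
    field_simp
    ring
  calc ∫ t : ℝ, |Real.sqrt u * Real.exp t| •
        ((Real.sqrt u * Real.exp t)⁻¹ * Real.exp (-(Real.sqrt u * Real.exp t) - u/(Real.sqrt u * Real.exp t)))
      = ∫ t : ℝ, Real.exp (-(2 * Real.sqrt u) * Real.cosh |t|) := by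
        exact congrArg _ (funext heq)
    _ = 2 * ∫ t in Ioi (0:ℝ), Real.exp (-(2 * Real.sqrt u) * Real.cosh t) := integral_comp_abs (f := fun t => Real.exp (-(2 * Real.sqrt u) * Real.cosh t))
    _ = 2 * besselK 0 (2 * Real.sqrt u) := by
        unfold besselK
        congr 1
        refine setIntegral_congr_fun measurableSet_Ioi (fun t ht => ?_)
        simp

lemma integrableOn_inv_exp (u : ℝ) (hu : 0 < u) :
    IntegrableOn (fun s => s⁻¹ * Real.exp (-s - u/s)) (Ioi (0:ℝ)) := by
  have hmeas : AEStronglyMeasurable (fun s : ℝ => s⁻¹ * Real.exp (-s - u/s))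
      (volume.restrict (Ioi 0)) := by
    apply ContinuousOn.aestronglyMeasurable _ measurableSet_Ioi
    exact (continuousOn_inv₀.mono (fun s hs => ne_of_gt hs)).mul
      (((continuousOn_id.neg).sub (continuousOn_const.div continuousOn_id
        (fun s hs => ne_of_gt hs))).rexp)
  have hint : IntegrableOn (fun s : ℝ => (u⁻¹ * Real.exp (-1)) * Real.exp (-(1:ℝ)*s)) (Ioi 0) :=
    (exp_neg_integrableOn_Ioi 0 one_pos).const_mul _
  apply hint.mono' hmeas
  filter_upwards [ae_restrict_mem measurableSet_Ioi] with s hs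
  have hs0 : (0:ℝ) < s := hs
  have hw : (0:ℝ) < u/s := div_pos hu hs0
  have key : s⁻¹ * Real.exp (-(u/s)) ≤ u⁻¹ * Real.exp (-1) := by
    have h1 : u/s ≤ Real.exp (u/s - 1) := by
      have := Real.add_one_le_exp (u/s - 1)
      linarith
    have h2 : (u/s) * Real.exp (-(u/s)) ≤ Real.exp (-1) := by
      calc (u/s) * Real.exp (-(u/s))
          ≤ Real.exp (u/s - 1) * Real.exp (-(u/s)) :=
            mul_le_mul_of_nonneg_right h1 (Real.exp_pos _).le
        _ = Real.exp (-1) := by rw [← Real.exp_add]; congr 1; ring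
    calc s⁻¹ * Real.exp (-(u/s)) = u⁻¹ * ((u/s) * Real.exp (-(u/s))) := by
          field_simp
        _ ≤ u⁻¹ * Real.exp (-1) := by
          apply mul_le_mul_of_nonneg_left h2 (inv_pos.mpr hu).le
  rw [Real.norm_eq_abs, abs_of_pos (by positivity)]
  calc s⁻¹ * Real.exp (-s - u/s) = (s⁻¹ * Real.exp (-(u/s))) * Real.exp (-s) := by
        rw [mul_assoc, ← Real.exp_add]; ring_nf
    _ ≤ (u⁻¹ * Real.exp (-1)) * Real.exp (-s) :=
        mul_le_mul_of_nonneg_right key (Real.exp_pos _).le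
    _ = (u⁻¹ * Real.exp (-1)) * Real.exp (-(1:ℝ)*s) := by norm_num


theorem K0_quadratic_argument_integral (a b c : ℝ) (ha : 0 < a) (hb : 0 < b) (hc : 0 < c) :
    ∫ x in Set.Ioi (0:ℝ),
        x ^ (-(3:ℝ)/2) * besselK 0 (2 * Real.sqrt ((a * x ^ 2 + b * x + c) / x)) =
      π * Real.exp (-2 * Real.sqrt (2 * Real.sqrt (a * c) + b)) / (2 * Real.sqrt c) := by
  set F : ℝ → ℝ → ℝ := fun x s =>
    x ^ (-(3:ℝ)/2) * (2⁻¹ * (s⁻¹ * Real.exp (-s - (a*x^2+b*x+c)/(x*s)))) with hF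
  have hu : ∀ x : ℝ, 0 < x → 0 < (a*x^2+b*x+c)/x := by
    intro x hx
    apply div_pos (by nlinarith) hx
  -- Step A
  have stepA : ∀ x ∈ Ioi (0:ℝ),
      x ^ (-(3:ℝ)/2) * besselK 0 (2 * Real.sqrt ((a * x ^ 2 + b * x + c) / x))
        = ∫ s in Ioi (0:ℝ), F x s := by
    intro x hx
    have hx0 : (0:ℝ) < x := hx
    have hrep := besselK_rep _ (hu x hx0)
    have h1 : ∀ s : ℝ, F x s
        = (x ^ (-(3:ℝ)/2) * 2⁻¹) * (s⁻¹ * Real.exp (-s - ((a*x^2+b*x+c)/x)/s)) := by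
      intro s
      rw [hF]
      simp only
      rw [div_div]
      ring
    calc x ^ (-(3:ℝ)/2) * besselK 0 (2 * Real.sqrt ((a * x ^ 2 + b * x + c) / x))
        = (x ^ (-(3:ℝ)/2) * 2⁻¹) *
            ∫ s in Ioi (0:ℝ), s⁻¹ * Real.exp (-s - ((a*x^2+b*x+c)/x)/s) := by
          rw [hrep]; ring
      _ = ∫ s in Ioi (0:ℝ), F x s := by
          rw [← MeasureTheory.integral_const_mul]
          exact (setIntegral_congr_fun measurableSet_Ioi (fun s _ => (h1 s).symm))
  rw [setIntegral_congr_fun measurableSet_Ioi stepA]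
  -- measurability
  have hFm : Measurable (Function.uncurry F) := by
    rw [hF]; unfold Function.uncurry; fun_prop
  have hFm' : ∀ x : ℝ, Measurable (F x) := fun x => hFm.of_uncurry_left
  -- nonneg and integrable in s for x > 0
  have hFnn : ∀ x ∈ Ioi (0:ℝ), ∀ s ∈ Ioi (0:ℝ), 0 ≤ F x s := by
    intro x hx s hs
    have hx0 : (0:ℝ) < x := hx
    have hs0 : (0:ℝ) < s := hs
    rw [hF]
    have := Real.rpow_nonneg hx0.le (-(3:ℝ)/2)
    positivity
  have hFint : ∀ x ∈ Ioi (0:ℝ), IntegrableOn (F x) (Ioi (0:ℝ)) := by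
    intro x hx
    have hx0 : (0:ℝ) < x := hx
    have := ((integrableOn_inv_exp _ (hu x hx0)).const_mul (x ^ (-(3:ℝ)/2) * 2⁻¹))
    apply IntegrableOn.congr_fun this _ measurableSet_Ioi
    intro s hs
    have hs0 : (0:ℝ) < s := hs
    rw [hF]
    simp only
    rw [div_div]
    ring
  -- lintegral machinery
  have hFnn' : ∀ x ∈ Ioi (0:ℝ), 0 ≤ᵐ[volume.restrict (Ioi (0:ℝ))] F x := by
    intro x hx
    filter_upwards [ae_restrict_mem measurableSet_Ioi] with s hs using hFnn x hx s hs
  have hG_meas : Measurable fun x => ∫⁻ s in Ioi (0:ℝ), ENNReal.ofReal (F x s) := by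
    apply Measurable.lintegral_prod_right
    exact ENNReal.measurable_ofReal.comp hFm
  have hG_eq : ∀ x ∈ Ioi (0:ℝ), (∫ s in Ioi (0:ℝ), F x s)
      = ENNReal.toReal (∫⁻ s in Ioi (0:ℝ), ENNReal.ofReal (F x s)) := by
    intro x hx
    exact integral_eq_lintegral_of_nonneg_ae (hFnn' x hx)
      ((hFm' x).aestronglyMeasurable)
  have hfin : ∀ x ∈ Ioi (0:ℝ), (∫⁻ s in Ioi (0:ℝ), ENNReal.ofReal (F x s)) ≠ ⊤ := by
    intro x hx
    rw [← ofReal_integral_eq_lintegral_ofReal (hFint x hx) (hFnn' x hx)]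
    exact ENNReal.ofReal_ne_top
  rw [integral_eq_lintegral_of_nonneg_ae ?nn ?ms]
  case nn =>
    filter_upwards [ae_restrict_mem measurableSet_Ioi] with x hx
    exact setIntegral_nonneg measurableSet_Ioi (fun s hs => hFnn x hx s hs)
  case ms =>
    apply AEStronglyMeasurable.congr
      (ENNReal.measurable_toReal.comp hG_meas).aestronglyMeasurable
    filter_upwards [ae_restrict_mem measurableSet_Ioi] with x hx
    exact (hG_eq x hx).symm
  have hswap : (∫⁻ x in Ioi (0:ℝ), ENNReal.ofReal (∫ s in Ioi (0:ℝ), F x s))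
      = ∫⁻ s in Ioi (0:ℝ), ∫⁻ x in Ioi (0:ℝ), ENNReal.ofReal (F x s) := by
    calc ∫⁻ x in Ioi (0:ℝ), ENNReal.ofReal (∫ s in Ioi (0:ℝ), F x s)
        = ∫⁻ x in Ioi (0:ℝ), ∫⁻ s in Ioi (0:ℝ), ENNReal.ofReal (F x s) := by
          apply lintegral_congr_ae
          filter_upwards [ae_restrict_mem measurableSet_Ioi] with x hx
          rw [hG_eq x hx, ENNReal.ofReal_toReal (hfin x hx)]
      _ = ∫⁻ s in Ioi (0:ℝ), ∫⁻ x in Ioi (0:ℝ), ENNReal.ofReal (F x s) :=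
          lintegral_lintegral_swap ((ENNReal.measurable_ofReal.comp hFm).aemeasurable)
  rw [hswap]
  have hQ : (0:ℝ) < b + 2 * Real.sqrt (a*c) := by positivity
  have hD : (0:ℝ) ≤ 2⁻¹ * Real.sqrt (π/c) := by positivity
  have inner_eq : ∀ s ∈ Ioi (0:ℝ), (∫⁻ x in Ioi (0:ℝ), ENNReal.ofReal (F x s))
      = ENNReal.ofReal ((2⁻¹ * Real.sqrt (π/c)) *
          (s ^ (-(1:ℝ)/2) * Real.exp (-(1*s) - (b + 2 * Real.sqrt (a*c))/s))) := by
    intro s hs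
    have hs0 : (0:ℝ) < s := hs
    have hK : (0:ℝ) ≤ 2⁻¹ * (s⁻¹ * Real.exp (-s - b/s)) := by positivity
    have hW := threehalf_integral (a/s) (c/s) (div_pos ha hs0) (div_pos hc hs0)
    have hWpos : 0 < Real.sqrt (π/(c/s)) * Real.exp (-2 * Real.sqrt ((a/s)*(c/s))) := by
      have : (0:ℝ) < π/(c/s) := div_pos Real.pi_pos (div_pos hc hs0)
      positivity
    have hHint : IntegrableOn
        (fun x : ℝ => x ^ (-(3:ℝ)/2) * Real.exp (-((a/s)*x) - (c/s)/x)) (Ioi 0) := by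
      by_contra h
      rw [MeasureTheory.integral_undef h] at hW
      exact hWpos.ne' hW.symm
    have hHnn : 0 ≤ᵐ[volume.restrict (Ioi (0:ℝ))]
        (fun x : ℝ => x ^ (-(3:ℝ)/2) * Real.exp (-((a/s)*x) - (c/s)/x)) := by
      filter_upwards [ae_restrict_mem measurableSet_Ioi] with x hx
      have hx0 : (0:ℝ) < x := hx
      have := Real.rpow_nonneg hx0.le (-(3:ℝ)/2)
      positivity
    calc ∫⁻ x in Ioi (0:ℝ), ENNReal.ofReal (F x s)
        = ∫⁻ x in Ioi (0:ℝ), ENNReal.ofReal (2⁻¹ * (s⁻¹ * Real.exp (-s - b/s)))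
            * ENNReal.ofReal (x ^ (-(3:ℝ)/2) * Real.exp (-((a/s)*x) - (c/s)/x)) := by
          apply lintegral_congr_ae
          filter_upwards [ae_restrict_mem measurableSet_Ioi] with x hx
          have hx0 : (0:ℝ) < x := hx
          rw [← ENNReal.ofReal_mul hK]
          congr 1
          have hexp : Real.exp (-s - (a*x^2+b*x+c)/(x*s))
              = Real.exp (-s - b/s) * Real.exp (-((a/s)*x) - (c/s)/x) := by
            rw [← Real.exp_add]
            congr 1
            field_simp
            try ring
          rw [hF]
          simp only
          rw [hexp]
          ring
      _ = ENNReal.ofReal (2⁻¹ * (s⁻¹ * Real.exp (-s - b/s)))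
            * ∫⁻ x in Ioi (0:ℝ), ENNReal.ofReal
              (x ^ (-(3:ℝ)/2) * Real.exp (-((a/s)*x) - (c/s)/x)) :=
          lintegral_const_mul' _ _ ENNReal.ofReal_ne_top
      _ = ENNReal.ofReal (2⁻¹ * (s⁻¹ * Real.exp (-s - b/s)))
            * ENNReal.ofReal (Real.sqrt (π/(c/s)) * Real.exp (-2 * Real.sqrt ((a/s)*(c/s)))) := by
          rw [← ofReal_integral_eq_lintegral_ofReal hHint hHnn, hW]
      _ = ENNReal.ofReal ((2⁻¹ * Real.sqrt (π/c)) *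
            (s ^ (-(1:ℝ)/2) * Real.exp (-(1*s) - (b + 2 * Real.sqrt (a*c))/s))) := by
          rw [← ENNReal.ofReal_mul hK]
          congr 1
          have h1 : Real.sqrt ((a/s)*(c/s)) = Real.sqrt (a*c)/s := by
            rw [div_mul_div_comm, Real.sqrt_div (mul_pos ha hc).le, Real.sqrt_mul_self hs0.le]
          have h2 : Real.sqrt (π/(c/s)) = Real.sqrt (π/c) * Real.sqrt s := by
            rw [show π/(c/s) = (π/c)*s by field_simp,
              Real.sqrt_mul (div_nonneg Real.pi_pos.le hc.le)]
          have h3 : s⁻¹ * Real.sqrt s = s ^ (-(1:ℝ)/2) := by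
            rw [show (-(1:ℝ)/2) = -(1/2:ℝ) by norm_num, Real.rpow_neg hs0.le,
              ← Real.sqrt_eq_rpow, inv_eq_one_div (Real.sqrt s), ← Real.sqrt_div_self']
            ring
          have h4 : Real.exp (-s - b/s) * Real.exp (-2 * (Real.sqrt (a*c)/s))
              = Real.exp (-(1*s) - (b + 2 * Real.sqrt (a*c))/s) := by
            rw [← Real.exp_add]
            congr 1
            field_simp
            try ring
          rw [h1, h2, ← h3, ← h4]
          ring
  have hhalf := halfpow_integral (b + 2 * Real.sqrt (a*c)) 1 hQ one_pos
  have hVpos : (0:ℝ) < Real.sqrt (π/1) * Real.exp (-2 * Real.sqrt ((b + 2 * Real.sqrt (a*c))*1)) := by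
    have : (0:ℝ) < π/1 := by linarith [Real.pi_pos]
    positivity
  have hSint : IntegrableOn
      (fun u : ℝ => u ^ (-(1:ℝ)/2) * Real.exp (-(1*u) - (b + 2 * Real.sqrt (a*c))/u)) (Ioi 0) := by
    by_contra h
    rw [MeasureTheory.integral_undef h] at hhalf
    exact hVpos.ne' hhalf.symm
  have hSnn : 0 ≤ᵐ[volume.restrict (Ioi (0:ℝ))]
      (fun u : ℝ => u ^ (-(1:ℝ)/2) * Real.exp (-(1*u) - (b + 2 * Real.sqrt (a*c))/u)) := by
    filter_upwards [ae_restrict_mem measurableSet_Ioi] with u hu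
    have hu0 : (0:ℝ) < u := hu
    have := Real.rpow_nonneg hu0.le (-(1:ℝ)/2)
    positivity
  have final : (∫⁻ s in Ioi (0:ℝ), ∫⁻ x in Ioi (0:ℝ), ENNReal.ofReal (F x s))
      = ENNReal.ofReal ((2⁻¹ * Real.sqrt (π/c))
          * (Real.sqrt (π/1) * Real.exp (-2 * Real.sqrt ((b + 2 * Real.sqrt (a*c))*1)))) := by
    calc (∫⁻ s in Ioi (0:ℝ), ∫⁻ x in Ioi (0:ℝ), ENNReal.ofReal (F x s))
        = ∫⁻ s in Ioi (0:ℝ), ENNReal.ofReal (2⁻¹ * Real.sqrt (π/c))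
            * ENNReal.ofReal (s ^ (-(1:ℝ)/2)
              * Real.exp (-(1*s) - (b + 2 * Real.sqrt (a*c))/s)) := by
          apply lintegral_congr_ae
          filter_upwards [ae_restrict_mem measurableSet_Ioi] with s hs
          rw [inner_eq s hs, ← ENNReal.ofReal_mul hD]
      _ = ENNReal.ofReal (2⁻¹ * Real.sqrt (π/c))
            * ∫⁻ s in Ioi (0:ℝ), ENNReal.ofReal (s ^ (-(1:ℝ)/2)
              * Real.exp (-(1*s) - (b + 2 * Real.sqrt (a*c))/s)) :=
          lintegral_const_mul' _ _ ENNReal.ofReal_ne_top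
      _ = ENNReal.ofReal ((2⁻¹ * Real.sqrt (π/c))
            * (Real.sqrt (π/1) * Real.exp (-2 * Real.sqrt ((b + 2 * Real.sqrt (a*c))*1)))) := by
          rw [← ofReal_integral_eq_lintegral_ofReal hSint hSnn, hhalf,
            ← ENNReal.ofReal_mul hD]
  rw [final, ENNReal.toReal_ofReal (by positivity)]
  rw [mul_one, div_one]
  have hs1 : Real.sqrt (π/c) * Real.sqrt π = π / Real.sqrt c := by
    rw [Real.sqrt_div Real.pi_pos.le, div_mul_eq_mul_div, Real.mul_self_sqrt Real.pi_pos.le]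
  have hs2 : Real.sqrt (b + 2 * Real.sqrt (a*c)) = Real.sqrt (2 * Real.sqrt (a*c) + b) := by
    congr 1
    ring
  rw [hs2]
  linear_combination (2⁻¹ * Real.exp (-2 * Real.sqrt (2 * Real.sqrt (a*c) + b))) * hs1
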